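/- Let n be a positive integer, let ρ > 0 and τ > 0 be real numbers, and let A be a real symmetric positive semidefinite n×n matrix with eigendecomposition A = U Σ Uᵀ, where U is an n×n orthogonal matrix and Σ is diagonal with nonnegative diagonal entries σ₁, …, σₙ. For each i, choose γᵢ* ≥ 0 minimizing the function γ ↦ (ρ/2)·(σᵢ − γ²)² + τ·γ over [0, ∞), and let Γ* be the diagonal matrix with entries γ₁*, …, γₙ*. Then L* = Γ* Uᵀ is a global minimizer over all real n×n matrices L of (ρ/2)·‖A − LᵀL‖_F² + τ·‖L‖_*. -/

import Mathlib

open Matrix BigOperators Finset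

noncomputable def frobNormSq {m n : ℕ} (M : Matrix (Fin m) (Fin n) ℝ) : ℝ :=
  ∑ i, ∑ j, (M i j)^2

noncomputable def singularValues {m n : ℕ} (M : Matrix (Fin m) (Fin n) ℝ) : Fin n → ℝ :=
  fun i => Real.sqrt ((Matrix.isHermitian_conjTranspose_mul_self M).eigenvalues i)

noncomputable def nuclearNorm {m n : ℕ} (M : Matrix (Fin m) (Fin n) ℝ) : ℝ :=
  ∑ i, singularValues M i

/-!
Write `LᵀL = V diag(s²) Vᵀ` with `s` the singular values of `L` and `V` orthogonal, and put
`P = UᵀV`. The squares of the entries of the orthogonal matrix `P` form a doubly stochastic matrix,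
and both terms of the objective expand in it: `‖A - LᵀL‖_F² = ∑ᵢₖ Pᵢₖ² (σᵢ - sₖ²)²` and
`‖L‖_* = ∑ᵢₖ Pᵢₖ² sₖ`. So the objective is `∑ᵢₖ Pᵢₖ² fᵢ(sₖ)` for the scalar losses
`fᵢ(γ) = (ρ/2)(σᵢ - γ²)² + τγ`, and as each row of weights sums to `1` it is at least
`∑ᵢ fᵢ(γᵢ*)`. At `L = Γ* Uᵀ` the objective is exactly `∑ᵢ fᵢ(γᵢ*)`, because
`L*ᵀL* = U diag(γ*²) Uᵀ` has the same characteristic polynomial as `diag(γ*²)`.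
-/

section Spectral

variable {ι : Type*} [Fintype ι] [DecidableEq ι]

theorem sum_sq_row_eq_one_of_mul_transpose_eq_one {P : Matrix ι ι ℝ} (hP : P * Pᵀ = 1)
    (i : ι) : ∑ k, P i k ^ 2 = 1 := by
  simpa [mul_apply, pow_two] using congrFun (congrFun hP i) i

theorem sum_sq_col_eq_one_of_transpose_mul_eq_one {P : Matrix ι ι ℝ} (hP : Pᵀ * P = 1)
    (k : ι) : ∑ i, P i k ^ 2 = 1 := by
  simpa [mul_apply, pow_two] using congrFun (congrFun hP k) k

theorem transpose_mul_mul_transpose_mul_eq_one {U V : Matrix ι ι ℝ} (hU : Uᵀ * U = 1)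
    (hV : V * Vᵀ = 1) : Uᵀ * V * (Uᵀ * V)ᵀ = 1 := by
  rw [transpose_mul, transpose_transpose, Matrix.mul_assoc, ← Matrix.mul_assoc V, hV,
    Matrix.one_mul, hU]

theorem Matrix.IsHermitian.exists_orthogonal_eq_conj_diagonal {B : Matrix ι ι ℝ}
    (hB : B.IsHermitian) :
    ∃ V : Matrix ι ι ℝ, Vᵀ * V = 1 ∧ B = V * diagonal hB.eigenvalues * Vᵀ := by
  refine ⟨hB.eigenvectorUnitary, ?_, ?_⟩
  · simpa [star_eq_conjTranspose, conjTranspose_eq_transpose_of_trivial] using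
      (Unitary.mem_iff.mp hB.eigenvectorUnitary.2).1
  · simpa [star_eq_conjTranspose, conjTranspose_eq_transpose_of_trivial,
      RCLike.ofReal_real_eq_id] using hB.spectral_theorem

theorem Matrix.IsHermitian.sum_comp_eigenvalues_of_charpoly_eq {B : Matrix ι ι ℝ}
    (hB : B.IsHermitian) {d : ι → ℝ} (h : B.charpoly = (diagonal d).charpoly) (f : ℝ → ℝ) :
    ∑ i, f (hB.eigenvalues i) = ∑ i, f (d i) := by
  have hroots := hB.roots_charpoly_eq_eigenvalues
  rw [h, charpoly_diagonal, Polynomial.roots_prod _ _ (by simp [prod_ne_zero_iff,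
    Polynomial.X_sub_C_ne_zero])] at hroots
  simp only [Polynomial.roots_X_sub_C, RCLike.ofReal_real_eq_id, Function.id_comp,
    Multiset.bind_singleton] at hroots
  have hsums := congrArg (fun s => (s.map f).sum) hroots
  simp only [Multiset.map_map, Function.comp_def] at hsums
  rw [sum_eq_multiset_sum, sum_eq_multiset_sum, hsums]

end Spectral

section Frobenius

variable {m n : ℕ}

theorem frobNormSq_eq_trace (M : Matrix (Fin m) (Fin n) ℝ) : frobNormSq M = (Mᵀ * M).trace := by
  simp only [frobNormSq, trace, Matrix.diag, mul_apply, transpose_apply, pow_two]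
  exact sum_comm

theorem frobNormSq_transpose_mul_mul {U : Matrix (Fin m) (Fin m) ℝ}
    {V : Matrix (Fin n) (Fin n) ℝ} (hU : U * Uᵀ = 1) (hV : V * Vᵀ = 1)
    (M : Matrix (Fin m) (Fin n) ℝ) :
    frobNormSq (Uᵀ * M * V) = frobNormSq M := by
  have hconj : (Uᵀ * M * V)ᵀ * (Uᵀ * M * V) = Vᵀ * (Mᵀ * M * V) := by
    simp only [transpose_mul, transpose_transpose, Matrix.mul_assoc]
    rw [← Matrix.mul_assoc U, hU, Matrix.one_mul]
  rw [frobNormSq_eq_trace, frobNormSq_eq_trace, hconj, trace_mul_comm, Matrix.mul_assoc, hV,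
    Matrix.mul_one]

theorem frobNormSq_conj_diagonal_sub_conj_diagonal {U V : Matrix (Fin n) (Fin n) ℝ}
    (hU : Uᵀ * U = 1) (hV : Vᵀ * V = 1) (σ μ : Fin n → ℝ) :
    frobNormSq (U * diagonal σ * Uᵀ - V * diagonal μ * Vᵀ) =
      ∑ i, ∑ k, (Uᵀ * V) i k ^ 2 * (σ i - μ k) ^ 2 := by
  have hconj : Uᵀ * (U * diagonal σ * Uᵀ - V * diagonal μ * Vᵀ) * V =
      diagonal σ * (Uᵀ * V) - Uᵀ * V * diagonal μ := by
    simp only [Matrix.mul_sub, Matrix.sub_mul, Matrix.mul_assoc, hV, Matrix.mul_one]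
    simp only [← Matrix.mul_assoc, hU, Matrix.one_mul]
  rw [← frobNormSq_transpose_mul_mul (mul_eq_one_comm.mp hU) (mul_eq_one_comm.mp hV), hconj]
  simp only [frobNormSq, Matrix.sub_apply, diagonal_mul, mul_diagonal]
  refine sum_congr rfl fun i _ => sum_congr rfl fun k _ => ?_
  ring

end Frobenius

theorem sum_le_sum_sum_sq_mul {ι κ : Type*} [Fintype ι] [Fintype κ] {P : Matrix ι κ ℝ}
    (hP : ∀ i, ∑ k, P i k ^ 2 = 1) {a : ι → ℝ} {b : ι → κ → ℝ} (hab : ∀ i k, a i ≤ b i k) :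
    ∑ i, a i ≤ ∑ i, ∑ k, P i k ^ 2 * b i k :=
  calc ∑ i, a i = ∑ i, ∑ k, P i k ^ 2 * a i := by simp only [← sum_mul, hP, one_mul]
    _ ≤ ∑ i, ∑ k, P i k ^ 2 * b i k := by gcongr with i _ k _; exact hab i k

noncomputable def entryLoss (ρ τ s γ : ℝ) : ℝ :=
  ρ / 2 * (s - γ ^ 2) ^ 2 + τ * γ

noncomputable def objective {m n : ℕ} (ρ τ : ℝ) (A : Matrix (Fin n) (Fin n) ℝ)
    (L : Matrix (Fin m) (Fin n) ℝ) : ℝ :=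
  ρ / 2 * frobNormSq (A - Lᵀ * L) + τ * nuclearNorm L

section Objective

variable {m n : ℕ} {U : Matrix (Fin n) (Fin n) ℝ}

theorem sq_singularValues (M : Matrix (Fin m) (Fin n) ℝ) (k : Fin n) :
    singularValues M k ^ 2 = (isHermitian_conjTranspose_mul_self M).eigenvalues k :=
  Real.sq_sqrt (eigenvalues_conjTranspose_mul_self_nonneg M k)

theorem objective_eq_sum_sq_mul_entryLoss (ρ τ : ℝ) (hU : Uᵀ * U = 1) (σ : Fin n → ℝ)
    (L : Matrix (Fin m) (Fin n) ℝ) :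
    ∃ P : Matrix (Fin n) (Fin n) ℝ, (∀ i, ∑ k, P i k ^ 2 = 1) ∧
      objective ρ τ (U * diagonal σ * Uᵀ) L =
        ∑ i, ∑ k, P i k ^ 2 * entryLoss ρ τ (σ i) (singularValues L k) := by
  have hH := isHermitian_conjTranspose_mul_self L
  obtain ⟨V, hV, hLL⟩ := hH.exists_orthogonal_eq_conj_diagonal
  have hP := transpose_mul_mul_transpose_mul_eq_one hU (mul_eq_one_comm.mp hV)
  have hfrob := frobNormSq_conj_diagonal_sub_conj_diagonal hU hV σ hH.eigenvalues
  simp only [← sq_singularValues] at hfrob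
  refine ⟨Uᵀ * V, sum_sq_row_eq_one_of_mul_transpose_eq_one hP, ?_⟩
  have hnuc : nuclearNorm L = ∑ i, ∑ k, (Uᵀ * V) i k ^ 2 * singularValues L k := by
    rw [sum_comm]
    simp only [← sum_mul, sum_sq_col_eq_one_of_transpose_mul_eq_one (mul_eq_one_comm.mp hP),
      one_mul, nuclearNorm]
  rw [objective, ← conjTranspose_eq_transpose_of_trivial L, hLL, hfrob, hnuc, mul_sum, mul_sum,
    ← sum_add_distrib]
  refine sum_congr rfl fun i _ => ?_
  rw [mul_sum, mul_sum, ← sum_add_distrib]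
  refine sum_congr rfl fun k _ => ?_
  rw [entryLoss]
  ring

theorem transpose_mul_self_diagonal_mul_transpose (U : Matrix (Fin n) (Fin n) ℝ) (γ : Fin n → ℝ) :
    (diagonal γ * Uᵀ)ᵀ * (diagonal γ * Uᵀ) = U * diagonal (γ ^ 2) * Uᵀ := by
  rw [transpose_mul, transpose_transpose, diagonal_transpose, Matrix.mul_assoc,
    ← Matrix.mul_assoc (diagonal γ), diagonal_mul_diagonal, ← Matrix.mul_assoc, sq]
  rfl

theorem nuclearNorm_diagonal_mul_transpose (hU : Uᵀ * U = 1) {γ : Fin n → ℝ}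
    (hγ : ∀ i, 0 ≤ γ i) : nuclearNorm (diagonal γ * Uᵀ) = ∑ i, γ i := by
  have hcharpoly : ((diagonal γ * Uᵀ)ᴴ * (diagonal γ * Uᵀ)).charpoly =
      (diagonal (γ ^ 2)).charpoly := by
    rw [conjTranspose_eq_transpose_of_trivial, transpose_mul_self_diagonal_mul_transpose,
      Matrix.mul_assoc, charpoly_mul_comm, Matrix.mul_assoc, hU, Matrix.mul_one]
  unfold nuclearNorm singularValues
  rw [(isHermitian_conjTranspose_mul_self _).sum_comp_eigenvalues_of_charpoly_eq hcharpoly]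
  exact sum_congr rfl fun i _ => Real.sqrt_sq (hγ i)

theorem objective_diagonal_mul_transpose (ρ τ : ℝ) (hU : Uᵀ * U = 1) (σ : Fin n → ℝ)
    {γ : Fin n → ℝ} (hγ : ∀ i, 0 ≤ γ i) :
    objective ρ τ (U * diagonal σ * Uᵀ) (diagonal γ * Uᵀ) = ∑ i, entryLoss ρ τ (σ i) (γ i) := by
  have hfrob : frobNormSq (U * diagonal σ * Uᵀ - U * diagonal (γ ^ 2) * Uᵀ) =
      ∑ i, (σ i - γ i ^ 2) ^ 2 := by
    rw [frobNormSq_conj_diagonal_sub_conj_diagonal hU hU, hU]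
    refine sum_congr rfl fun i _ => ?_
    simp [one_apply, ite_pow, ite_mul]
  rw [objective, transpose_mul_self_diagonal_mul_transpose, hfrob,
    nuclearNorm_diagonal_mul_transpose hU hγ, mul_sum, mul_sum, ← sum_add_distrib]
  rfl

end Objective

theorem stmt_3_general (n : ℕ) (ρ τ : ℝ)
    (A U : Matrix (Fin n) (Fin n) ℝ) (σ γs : Fin n → ℝ)
    (hU : Uᵀ * U = 1)
    (hdec : A = U * Matrix.diagonal σ * Uᵀ)
    (hγs : ∀ i, 0 ≤ γs i)
    (hmin : ∀ i, ∀ γ : ℝ, 0 ≤ γ →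
      ρ / 2 * (σ i - γs i ^ 2) ^ 2 + τ * γs i ≤ ρ / 2 * (σ i - γ ^ 2) ^ 2 + τ * γ) :
    ∀ L : Matrix (Fin n) (Fin n) ℝ,
      ρ / 2 * frobNormSq (A - (Matrix.diagonal γs * Uᵀ)ᵀ * (Matrix.diagonal γs * Uᵀ)) +
          τ * nuclearNorm (Matrix.diagonal γs * Uᵀ) ≤
        ρ / 2 * frobNormSq (A - Lᵀ * L) + τ * nuclearNorm L := by
  intro L
  subst hdec
  obtain ⟨P, hP, hobj⟩ := objective_eq_sum_sq_mul_entryLoss ρ τ hU σ L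
  calc objective ρ τ (U * diagonal σ * Uᵀ) (diagonal γs * Uᵀ)
      = ∑ i, entryLoss ρ τ (σ i) (γs i) := objective_diagonal_mul_transpose ρ τ hU σ hγs
    _ ≤ ∑ i, ∑ k, P i k ^ 2 * entryLoss ρ τ (σ i) (singularValues L k) :=
        sum_le_sum_sum_sq_mul hP fun i k => hmin i _ (Real.sqrt_nonneg _)
    _ = objective ρ τ (U * diagonal σ * Uᵀ) L := hobj.symm

/-- If A = U Σ Uᵀ with U orthogonal, Σ = diag(σ), σᵢ ≥ 0, and for each i,
γ*ᵢ ≥ 0 minimizes γ ↦ (ρ/2)·(σᵢ − γ²)² + τ·γ over [0,∞), then L* = diag(γ*) Uᵀ is a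
global minimizer of L ↦ (ρ/2)·‖A − LᵀL‖_F² + τ·‖L‖_*. -/
theorem stmt_3 (n : ℕ) (hn : 0 < n) (ρ τ : ℝ) (hρ : 0 < ρ) (hτ : 0 < τ)
    (A U : Matrix (Fin n) (Fin n) ℝ) (σ γs : Fin n → ℝ)
    (hA : A.PosSemidef) (hU : Uᵀ * U = 1)
    (hdec : A = U * Matrix.diagonal σ * Uᵀ)
    (hσ : ∀ i, 0 ≤ σ i)
    (hγs : ∀ i, 0 ≤ γs i)
    (hmin : ∀ i, ∀ γ : ℝ, 0 ≤ γ →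
      ρ / 2 * (σ i - γs i ^ 2) ^ 2 + τ * γs i ≤ ρ / 2 * (σ i - γ ^ 2) ^ 2 + τ * γ) :
    ∀ L : Matrix (Fin n) (Fin n) ℝ,
      ρ / 2 * frobNormSq (A - (Matrix.diagonal γs * Uᵀ)ᵀ * (Matrix.diagonal γs * Uᵀ)) +
          τ * nuclearNorm (Matrix.diagonal γs * Uᵀ) ≤
        ρ / 2 * frobNormSq (A - Lᵀ * L) + τ * nuclearNorm L :=
  stmt_3_general n ρ τ A U σ γs hU hdec hγs hmin
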